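/- arXiv:1612.08651 — 8 statements merged into one kernel-verified Lean document; each statement's English description precedes it below -/
import Mathlib

section
/- Let p, q, r be pairwise distinct complex numbers and k a natural number. Then there exist complex numbers a, b, c, d, not all zero, such that a·(X−p)^{k+2}(X−q)^{k+1}(X−r)^k + b·(X−p)^{k+2}(X−r)^{k+1}(X−q)^k + c·(X−q)^{k+2}(X−p)^{k+1}(X−r)^k + d·(X−r)^{k+2}(X−p)^{k+1}(X−q)^k = 0 in ℂ[X]. Moreover, the four polynomials appearing are pairwise non-proportional. -/
/-!
All four polynomials are multiples of `(X - p)^(k+1) (X - q)^k (X - r)^k`, with cofactors the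
quadratics `(X - p)(X - q)`, `(X - p)(X - r)`, `(X - q)^2`, `(X - r)^2`; four polynomials of
degree at most two are linearly dependent. Multiplying by a nonzero scalar does not change the
roots, and the root multiplicities at `p, q, r` of the four polynomials are the distinct triples
`(k+2, k+1, k)`, `(k+2, k, k+1)`, `(k+1, k+2, k)`, `(k+1, k, k+2)`.
-/

open Polynomial

/-- Two polynomials are non-proportional: neither is a scalar multiple of the other. -/
def NonProp (f g : Polynomial ℂ) : Prop := ∀ e : ℂ, f ≠ C e * g ∧ g ≠ C e * f

theorem roots_eq_of_eq_C_mul {R : Type*} [CommRing R] [IsDomain R] {f g : R[X]} {e : R}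
    (hf : f ≠ 0) (h : f = C e * g) : f.roots = g.roots := by
  subst h
  exact roots_C_mul g fun he => hf (by simp [he])

theorem nonProp_of_roots_ne {f g : ℂ[X]} (hf : f ≠ 0) (hg : g ≠ 0) (h : f.roots ≠ g.roots) :
    NonProp f g :=
  fun _ => ⟨fun hfg => h (roots_eq_of_eq_C_mul hf hfg),
    fun hgf => h (roots_eq_of_eq_C_mul hg hgf).symm⟩

theorem roots_X_sub_C_pow_mul_X_sub_C_pow_mul_X_sub_C_pow {R : Type*} [CommRing R] [IsDomain R]
    (a b c : R) (i j l : ℕ) :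
    ((X - C a) ^ i * (X - C b) ^ j * (X - C c) ^ l).roots = i • {a} + j • {b} + l • {c} := by
  have hab : (X - C a) ^ i * (X - C b) ^ j ≠ 0 := by simp [X_sub_C_ne_zero]
  have habc : (X - C a) ^ i * (X - C b) ^ j * (X - C c) ^ l ≠ 0 := by simp [X_sub_C_ne_zero]
  simp only [roots_mul habc, roots_mul hab, roots_pow, roots_X_sub_C]

theorem X_sub_C_quadratic_relation {R : Type*} [CommRing R] (p q r : R) :
    C (-(q - r) * (p - r)) * ((X - C p) * (X - C q)) +
      C (-(q - r) * (p - q)) * ((X - C p) * (X - C r)) +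
      C ((p - r) ^ 2) * (X - C q) ^ 2 + C (-(p - q) ^ 2) * (X - C r) ^ 2 = 0 := by
  simp only [map_neg, map_mul, map_sub, map_pow]
  ring

theorem stmt_2 (p q r : ℂ) (hpq : p ≠ q) (hpr : p ≠ r) (hqr : q ≠ r) (k : ℕ) :
    (∃ a b c d : ℂ, ¬(a = 0 ∧ b = 0 ∧ c = 0 ∧ d = 0) ∧
      C a * ((X - C p) ^ (k + 2) * (X - C q) ^ (k + 1) * (X - C r) ^ k) +
      C b * ((X - C p) ^ (k + 2) * (X - C r) ^ (k + 1) * (X - C q) ^ k) +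
      C c * ((X - C q) ^ (k + 2) * (X - C p) ^ (k + 1) * (X - C r) ^ k) +
      C d * ((X - C r) ^ (k + 2) * (X - C p) ^ (k + 1) * (X - C q) ^ k) = 0) ∧
    Pairwise fun i j : Fin 4 =>
      NonProp
        ((![(X - C p) ^ (k + 2) * (X - C q) ^ (k + 1) * (X - C r) ^ k,
            (X - C p) ^ (k + 2) * (X - C r) ^ (k + 1) * (X - C q) ^ k,
            (X - C q) ^ (k + 2) * (X - C p) ^ (k + 1) * (X - C r) ^ k,
            (X - C r) ^ (k + 2) * (X - C p) ^ (k + 1) * (X - C q) ^ k]) i)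
        ((![(X - C p) ^ (k + 2) * (X - C q) ^ (k + 1) * (X - C r) ^ k,
            (X - C p) ^ (k + 2) * (X - C r) ^ (k + 1) * (X - C q) ^ k,
            (X - C q) ^ (k + 2) * (X - C p) ^ (k + 1) * (X - C r) ^ k,
            (X - C r) ^ (k + 2) * (X - C p) ^ (k + 1) * (X - C q) ^ k]) j) := by
  refine ⟨⟨-(q - r) * (p - r), -(q - r) * (p - q), (p - r) ^ 2, -(p - q) ^ 2,
    fun h => sub_ne_zero.mpr hpr (pow_eq_zero_iff two_ne_zero |>.mp h.2.2.1), ?_⟩, ?_⟩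
  · linear_combination (X - C p) ^ (k + 1) * (X - C q) ^ k * (X - C r) ^ k *
      X_sub_C_quadratic_relation p q r
  · intro i j hij
    fin_cases i <;> fin_cases j <;> first
      | exact absurd rfl hij
      | refine nonProp_of_roots_ne (by simp [X_sub_C_ne_zero]) (by simp [X_sub_C_ne_zero])
          fun hroots => ?_
        have hcounts := congrArg (fun s => (s.count p, s.count q, s.count r)) hroots
        simp [roots_X_sub_C_pow_mul_X_sub_C_pow_mul_X_sub_C_pow, hpq, hpr, hqr, hpq.symm,
          hpr.symm, hqr.symm] at hcounts
end

section
/- Let p, q, r, s be pairwise distinct complex numbers and k₁, k₂ natural numbers with k₁ ≥ 1. Then there exist complex numbers a, b, c, d, not all zero, such that a·(X−p)^{k₁+1}(X−q)^{k₁}(X−r)^{k₂+1}(X−s)^{k₂} + b·(X−q)^{k₁+1}(X−p)^{k₁}(X−r)^{k₂+1}(X−s)^{k₂} + c·(X−p)^{k₁+1}(X−q)^{k₁}(X−s)^{k₂+1}(X−r)^{k₂} + d·(X−q)^{k₁+1}(X−p)^{k₁}(X−s)^{k₂+1}(X−r)^{k₂} = 0 in ℂ[X], and the four polynomials appearing are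 pairwise non-proportional. -/
/-!
Removing the common factor `(X - p)^k₁ (X - q)^k₁ (X - r)^k₂ (X - s)^k₂` leaves the four quadratics
`(X - p)(X - r)`, `(X - q)(X - r)`, `(X - p)(X - s)`, `(X - q)(X - s)`, which are linearly dependent
in the three-dimensional space of polynomials of degree at most two:
`(q - s)(X - p)(X - r) - (p - s)(X - q)(X - r) - (q - r)(X - p)(X - s) + (p - r)(X - q)(X - s) = 0`.
The four polynomials are pairwise non-proportional because root multiplicities are unchanged under
multiplication by a nonzero constant, and their multiplicities at `(p, r)`, namely
`(k₁ + 1, k₂ + 1)`, `(k₁, k₂ + 1)`, `(k₁ + 1, k₂)`, `(k₁, k₂)`, are pairwise distinct.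
-/

open Polynomial Function

section RootMultiplicity

variable {R : Type*} [CommRing R] [IsDomain R]

theorem rootMultiplicity_X_sub_C_pow_eq_ite [DecidableEq R] (x a : R) (n : ℕ) :
    rootMultiplicity x ((X - C a) ^ n) = if x = a then n else 0 := by
  split_ifs with h
  · rw [h, rootMultiplicity_X_sub_C_pow]
  · exact rootMultiplicity_eq_zero (by simp [sub_eq_zero, h])

theorem rootMultiplicity_eq_of_eq_C_mul {f g : R[X]} {e : R} (hf : f ≠ 0) (h : f = C e * g)
    (x : R) : rootMultiplicity x f = rootMultiplicity x g := by
  subst h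
  rw [rootMultiplicity_mul hf, rootMultiplicity_C, zero_add]

end RootMultiplicity

theorem nonProp_of_rootMultiplicity_ne {f g : ℂ[X]} (hf : f ≠ 0) (hg : g ≠ 0) {x : ℂ}
    (h : rootMultiplicity x f ≠ rootMultiplicity x g) : NonProp f g := fun _ =>
  ⟨fun he => h (rootMultiplicity_eq_of_eq_C_mul hf he x),
    fun he => h (rootMultiplicity_eq_of_eq_C_mul hg he x).symm⟩

theorem pairwise_nonProp_of_injective_rootMultiplicity {ι : Type*} {F : ι → ℂ[X]}
    (hF : ∀ i, F i ≠ 0) (x y : ℂ)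
    (hinj : Injective fun i => (rootMultiplicity x (F i), rootMultiplicity y (F i))) :
    Pairwise fun i j => NonProp (F i) (F j) := by
  intro i j hij
  by_cases hx : rootMultiplicity x (F i) = rootMultiplicity x (F j)
  · exact nonProp_of_rootMultiplicity_ne (hF i) (hF j) fun hy => hij (hinj (Prod.ext hx hy))
  · exact nonProp_of_rootMultiplicity_ne (hF i) (hF j) hx

section PowProd

variable (k₁ k₂ : ℕ)

noncomputable def powProd (a b c d : ℂ) : ℂ[X] :=
  (X - C a) ^ (k₁ + 1) * (X - C b) ^ k₁ * (X - C c) ^ (k₂ + 1) * (X - C d) ^ k₂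

theorem powProd_ne_zero (a b c d : ℂ) : powProd k₁ k₂ a b c d ≠ 0 := by
  simp [powProd, X_sub_C_ne_zero]

theorem rootMultiplicity_powProd (x a b c d : ℂ) :
    rootMultiplicity x (powProd k₁ k₂ a b c d) =
      (if x = a then k₁ + 1 else 0) + (if x = b then k₁ else 0) +
        (if x = c then k₂ + 1 else 0) + (if x = d then k₂ else 0) := by
  have h := powProd_ne_zero k₁ k₂ a b c d
  unfold powProd at h ⊢
  rw [rootMultiplicity_mul h, rootMultiplicity_mul (left_ne_zero_of_mul h),
    rootMultiplicity_mul (left_ne_zero_of_mul (left_ne_zero_of_mul h))]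
  simp only [rootMultiplicity_X_sub_C_pow_eq_ite]

end PowProd

theorem stmt_3_general (p q r s : ℂ) (hpq : p ≠ q) (hpr : p ≠ r) (hps : p ≠ s)
    (hqr : q ≠ r) (hrs : r ≠ s) (k₁ k₂ : ℕ) :
    (∃ a b c d : ℂ, ¬(a = 0 ∧ b = 0 ∧ c = 0 ∧ d = 0) ∧
      C a * ((X - C p) ^ (k₁ + 1) * (X - C q) ^ k₁ * (X - C r) ^ (k₂ + 1) * (X - C s) ^ k₂) +
      C b * ((X - C q) ^ (k₁ + 1) * (X - C p) ^ k₁ * (X - C r) ^ (k₂ + 1) * (X - C s) ^ k₂) +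
      C c * ((X - C p) ^ (k₁ + 1) * (X - C q) ^ k₁ * (X - C s) ^ (k₂ + 1) * (X - C r) ^ k₂) +
      C d * ((X - C q) ^ (k₁ + 1) * (X - C p) ^ k₁ * (X - C s) ^ (k₂ + 1) * (X - C r) ^ k₂) = 0) ∧
    Pairwise fun i j : Fin 4 =>
      NonProp
        ((![(X - C p) ^ (k₁ + 1) * (X - C q) ^ k₁ * (X - C r) ^ (k₂ + 1) * (X - C s) ^ k₂,
            (X - C q) ^ (k₁ + 1) * (X - C p) ^ k₁ * (X - C r) ^ (k₂ + 1) * (X - C s) ^ k₂,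
            (X - C p) ^ (k₁ + 1) * (X - C q) ^ k₁ * (X - C s) ^ (k₂ + 1) * (X - C r) ^ k₂,
            (X - C q) ^ (k₁ + 1) * (X - C p) ^ k₁ * (X - C s) ^ (k₂ + 1) * (X - C r) ^ k₂]) i)
        ((![(X - C p) ^ (k₁ + 1) * (X - C q) ^ k₁ * (X - C r) ^ (k₂ + 1) * (X - C s) ^ k₂,
            (X - C q) ^ (k₁ + 1) * (X - C p) ^ k₁ * (X - C r) ^ (k₂ + 1) * (X - C s) ^ k₂,
            (X - C p) ^ (k₁ + 1) * (X - C q) ^ k₁ * (X - C s) ^ (k₂ + 1) * (X - C r) ^ k₂,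
            (X - C q) ^ (k₁ + 1) * (X - C p) ^ k₁ * (X - C s) ^ (k₂ + 1) * (X - C r) ^ k₂]) j) := by
  refine ⟨⟨q - s, -(p - s), -(q - r), p - r, fun h => hpr (sub_eq_zero.mp h.2.2.2), ?_⟩, ?_⟩
  · simp only [map_sub, map_neg]
    ring
  · let F := ![powProd k₁ k₂ p q r s, powProd k₁ k₂ q p r s,
      powProd k₁ k₂ p q s r, powProd k₁ k₂ q p s r]
    have hF : ∀ i, F i ≠ 0 := fun i => by fin_cases i <;> apply powProd_ne_zero
    have hmult_p : ∀ i, rootMultiplicity p (F i) = ![k₁ + 1, k₁, k₁ + 1, k₁] i := fun i => by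
      fin_cases i <;> simp [F, rootMultiplicity_powProd, hpq, hpr, hps]
    have hmult_r : ∀ i, rootMultiplicity r (F i) = ![k₂ + 1, k₂ + 1, k₂, k₂] i := fun i => by
      fin_cases i <;> simp [F, rootMultiplicity_powProd, hpr.symm, hqr.symm, hrs]
    show Pairwise fun i j => NonProp (F i) (F j)
    refine pairwise_nonProp_of_injective_rootMultiplicity hF p r fun i j hij => ?_
    simp only [hmult_p, hmult_r, Prod.mk.injEq] at hij
    fin_cases i <;> fin_cases j <;> simp at hij ⊢

theorem stmt_3 (p q r s : ℂ) (hpq : p ≠ q) (hpr : p ≠ r) (hps : p ≠ s)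
    (hqr : q ≠ r) (hqs : q ≠ s) (hrs : r ≠ s) (k₁ k₂ : ℕ) (hk₁ : 1 ≤ k₁) :
    (∃ a b c d : ℂ, ¬(a = 0 ∧ b = 0 ∧ c = 0 ∧ d = 0) ∧
      C a * ((X - C p) ^ (k₁ + 1) * (X - C q) ^ k₁ * (X - C r) ^ (k₂ + 1) * (X - C s) ^ k₂) +
      C b * ((X - C q) ^ (k₁ + 1) * (X - C p) ^ k₁ * (X - C r) ^ (k₂ + 1) * (X - C s) ^ k₂) +
      C c * ((X - C p) ^ (k₁ + 1) * (X - C q) ^ k₁ * (X - C s) ^ (k₂ + 1) * (X - C r) ^ k₂) +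
      C d * ((X - C q) ^ (k₁ + 1) * (X - C p) ^ k₁ * (X - C s) ^ (k₂ + 1) * (X - C r) ^ k₂) = 0) ∧
    Pairwise fun i j : Fin 4 =>
      NonProp
        ((![(X - C p) ^ (k₁ + 1) * (X - C q) ^ k₁ * (X - C r) ^ (k₂ + 1) * (X - C s) ^ k₂,
            (X - C q) ^ (k₁ + 1) * (X - C p) ^ k₁ * (X - C r) ^ (k₂ + 1) * (X - C s) ^ k₂,
            (X - C p) ^ (k₁ + 1) * (X - C q) ^ k₁ * (X - C s) ^ (k₂ + 1) * (X - C r) ^ k₂,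
            (X - C q) ^ (k₁ + 1) * (X - C p) ^ k₁ * (X - C s) ^ (k₂ + 1) * (X - C r) ^ k₂]) i)
        ((![(X - C p) ^ (k₁ + 1) * (X - C q) ^ k₁ * (X - C r) ^ (k₂ + 1) * (X - C s) ^ k₂,
            (X - C q) ^ (k₁ + 1) * (X - C p) ^ k₁ * (X - C r) ^ (k₂ + 1) * (X - C s) ^ k₂,
            (X - C p) ^ (k₁ + 1) * (X - C q) ^ k₁ * (X - C s) ^ (k₂ + 1) * (X - C r) ^ k₂,
            (X - C q) ^ (k₁ + 1) * (X - C p) ^ k₁ * (X - C s) ^ (k₂ + 1) * (X - C r) ^ k₂]) j) :=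
  stmt_3_general p q r s hpq hpr hps hqr hrs k₁ k₂
end

section
/- Let m ≥ 1 and let a₁, …, a_{m+2} be pairwise distinct complex numbers. Let g ∈ ℂ[X] be a nonzero polynomial with g(aᵢ) ≠ 0 for all i. Then the m+2 polynomials g(X)·(X−a₁)^m, …, g(X)·(X−a_{m+2})^m are linearly dependent over ℂ, and they are pairwise non-proportional. -/
/-! The `m + 2` polynomials `(X - aᵢ) ^ m` lie in the `(m + 1)`-dimensional space of polynomials of
degree at most `m`, so they are dependent, and multiplying by `g` preserves dependence.
Two of them are not proportional because `aⱼ` is a root of `(X - aⱼ) ^ m` but not of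
`(X - aᵢ) ^ m`; cancelling `g` reduces the claim to this. -/

open Polynomial

theorem LinearIndependent.card_le_of_degree_lt {R ι : Type*} [Ring R] [StrongRankCondition R]
    [Fintype ι] {p : ι → R[X]} {n : ℕ} (hli : LinearIndependent R p)
    (hp : ∀ i, (p i).degree < n) : Fintype.card ι ≤ n := by
  have hli' : LinearIndependent R (fun i ↦ (⟨p i, mem_degreeLT.2 (hp i)⟩ : degreeLT R n)) :=
    .of_comp (degreeLT R n).subtype hli
  simpa [Module.finrank_eq_card_basis (degreeLT.basis R n)] using hli'.fintype_card_le_finrank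

namespace Polynomial

variable {R : Type*} [CommRing R] [IsDomain R] {x y : R} {m : ℕ}

theorem X_sub_C_pow_ne_C_mul_X_sub_C_pow (hxy : x ≠ y) (hm : m ≠ 0) (e : R) :
    (X - C x) ^ m ≠ C e * (X - C y) ^ m := by
  intro h
  have hy : eval y ((X - C x) ^ m) = 0 := by simp [h, zero_pow hm]
  simp only [eval_pow, eval_sub, eval_X, eval_C, pow_eq_zero_iff hm, sub_eq_zero] at hy
  exact hxy hy.symm

theorem mul_X_sub_C_pow_ne_C_mul_mul_X_sub_C_pow {g : R[X]} (hg : g ≠ 0) (hxy : x ≠ y)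
    (hm : m ≠ 0) (e : R) : g * (X - C x) ^ m ≠ C e * (g * (X - C y) ^ m) := fun h ↦
  X_sub_C_pow_ne_C_mul_X_sub_C_pow hxy hm e <| mul_left_cancel₀ hg <| by rw [h, mul_left_comm]

end Polynomial

theorem stmt_5_general (m : ℕ) (hm : 1 ≤ m) (a : Fin (m + 2) → ℂ) (ha : Function.Injective a)
    (g : Polynomial ℂ) (hg : g ≠ 0) :
    ¬ LinearIndependent ℂ (fun i : Fin (m + 2) => g * (X - C (a i)) ^ m) ∧
    Pairwise fun i j : Fin (m + 2) =>
      NonProp (g * (X - C (a i)) ^ m) (g * (X - C (a j)) ^ m) := by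
  constructor
  · intro hli
    have hcard := (hli.of_comp (LinearMap.mulLeft ℂ g)).card_le_of_degree_lt (n := m + 1)
      fun i ↦ by rw [degree_pow, degree_X_sub_C, nsmul_one]; exact_mod_cast m.lt_succ_self
    simp at hcard
  · intro i j hij e
    have hm0 : m ≠ 0 := Nat.one_le_iff_ne_zero.1 hm
    exact ⟨mul_X_sub_C_pow_ne_C_mul_mul_X_sub_C_pow hg (ha.ne hij) hm0 e,
      mul_X_sub_C_pow_ne_C_mul_mul_X_sub_C_pow hg (ha.ne hij.symm) hm0 e⟩

theorem stmt_5 (m : ℕ) (hm : 1 ≤ m) (a : Fin (m + 2) → ℂ) (ha : Function.Injective a)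
    (g : Polynomial ℂ) (hg : g ≠ 0) (hga : ∀ i, g.eval (a i) ≠ 0) :
    ¬ LinearIndependent ℂ (fun i : Fin (m + 2) => g * (X - C (a i)) ^ m) ∧
    Pairwise fun i j : Fin (m + 2) =>
      NonProp (g * (X - C (a i)) ^ m) (g * (X - C (a j)) ^ m) :=
  stmt_5_general m hm a ha g hg
end

section
/- Let t ≥ 1 be a natural number and p, q, r pairwise distinct complex numbers. Then (q−r)·(X−p)^{t+1}(X−q)^t(X−r)^t + (r−p)·(X−q)^{t+1}(X−p)^t(X−r)^t + (p−q)·(X−r)^{t+1}(X−p)^t(X−q)^t = 0 in ℂ[X], and the three polynomials appearing are pairwise non-proportional with all coefficients (q−r), (r−p), (p−q) nonzero. -/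
open Polynomial

/-! The three linear forms `X - p`, `X - q`, `X - r` satisfy the linear relation
`(q - r)(X - p) + (r - p)(X - q) + (p - q)(X - r) = 0`; multiplying it by
`((X - p)(X - q)(X - r))^t` gives the identity. The three products are `X - a` times the same
monic polynomial, so they are monic and pairwise distinct, hence pairwise non-proportional. -/

theorem linear_relation_X_sub_C {R : Type*} [CommRing R] (p q r : R) :
    C (q - r) * (X - C p) + C (r - p) * (X - C q) + C (p - q) * (X - C r) = 0 := by
  simp only [map_sub]
  ring

theorem Polynomial.Monic.eq_of_eq_C_mul {R : Type*} [Semiring R] {f g : R[X]}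
    (hf : f.Monic) (hg : g.Monic) {e : R} (h : f = C e * g) : f = g := by
  have he : e = 1 := by rw [← hg.leadingCoeff_C_mul e, ← h, hf.leadingCoeff]
  rwa [he, map_one, one_mul] at h

theorem nonProp_X_sub_C_mul {g : ℂ[X]} (hg : g.Monic) {a b : ℂ} (hab : a ≠ b) :
    NonProp ((X - C a) * g) ((X - C b) * g) := by
  have hne : (X - C a) * g ≠ (X - C b) * g := fun h =>
    hab (C_injective (sub_right_injective (mul_right_cancel₀ hg.ne_zero h)))
  have hfa : ((X - C a) * g).Monic := (monic_X_sub_C a).mul hg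
  have hfb : ((X - C b) * g).Monic := (monic_X_sub_C b).mul hg
  exact fun e => ⟨fun h => hne (hfa.eq_of_eq_C_mul hfb h),
    fun h => hne (hfb.eq_of_eq_C_mul hfa h).symm⟩

theorem stmt_6_general (t : ℕ) (p q r : ℂ) (hpq : p ≠ q) (hpr : p ≠ r) (hqr : q ≠ r) :
    C (q - r) * ((X - C p) ^ (t + 1) * (X - C q) ^ t * (X - C r) ^ t) +
      C (r - p) * ((X - C q) ^ (t + 1) * (X - C p) ^ t * (X - C r) ^ t) +
      C (p - q) * ((X - C r) ^ (t + 1) * (X - C p) ^ t * (X - C q) ^ t) = 0 ∧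
    q - r ≠ 0 ∧ r - p ≠ 0 ∧ p - q ≠ 0 ∧
    NonProp ((X - C p) ^ (t + 1) * (X - C q) ^ t * (X - C r) ^ t)
      ((X - C q) ^ (t + 1) * (X - C p) ^ t * (X - C r) ^ t) ∧
    NonProp ((X - C p) ^ (t + 1) * (X - C q) ^ t * (X - C r) ^ t)
      ((X - C r) ^ (t + 1) * (X - C p) ^ t * (X - C q) ^ t) ∧
    NonProp ((X - C q) ^ (t + 1) * (X - C p) ^ t * (X - C r) ^ t)
      ((X - C r) ^ (t + 1) * (X - C p) ^ t * (X - C q) ^ t) := by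
  set g : ℂ[X] := (X - C p) ^ t * (X - C q) ^ t * (X - C r) ^ t with hg_def
  have hg : g.Monic :=
    (((monic_X_sub_C p).pow t).mul ((monic_X_sub_C q).pow t)).mul ((monic_X_sub_C r).pow t)
  have hP : (X - C p) ^ (t + 1) * (X - C q) ^ t * (X - C r) ^ t = (X - C p) * g := by
    rw [hg_def]; ring
  have hQ : (X - C q) ^ (t + 1) * (X - C p) ^ t * (X - C r) ^ t = (X - C q) * g := by
    rw [hg_def]; ring
  have hR : (X - C r) ^ (t + 1) * (X - C p) ^ t * (X - C q) ^ t = (X - C r) * g := by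
    rw [hg_def]; ring
  rw [hP, hQ, hR]
  exact ⟨by linear_combination g * linear_relation_X_sub_C p q r, sub_ne_zero.2 hqr,
    sub_ne_zero.2 hpr.symm, sub_ne_zero.2 hpq, nonProp_X_sub_C_mul hg hpq,
    nonProp_X_sub_C_mul hg hpr, nonProp_X_sub_C_mul hg hqr⟩

theorem stmt_6 (t : ℕ) (ht : 1 ≤ t) (p q r : ℂ) (hpq : p ≠ q) (hpr : p ≠ r) (hqr : q ≠ r) :
    C (q - r) * ((X - C p) ^ (t + 1) * (X - C q) ^ t * (X - C r) ^ t) +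
      C (r - p) * ((X - C q) ^ (t + 1) * (X - C p) ^ t * (X - C r) ^ t) +
      C (p - q) * ((X - C r) ^ (t + 1) * (X - C p) ^ t * (X - C q) ^ t) = 0 ∧
    q - r ≠ 0 ∧ r - p ≠ 0 ∧ p - q ≠ 0 ∧
    NonProp ((X - C p) ^ (t + 1) * (X - C q) ^ t * (X - C r) ^ t)
      ((X - C q) ^ (t + 1) * (X - C p) ^ t * (X - C r) ^ t) ∧
    NonProp ((X - C p) ^ (t + 1) * (X - C q) ^ t * (X - C r) ^ t)
      ((X - C r) ^ (t + 1) * (X - C p) ^ t * (X - C q) ^ t) ∧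
    NonProp ((X - C q) ^ (t + 1) * (X - C p) ^ t * (X - C r) ^ t)
      ((X - C r) ^ (t + 1) * (X - C p) ^ t * (X - C q) ^ t) :=
  stmt_6_general t p q r hpq hpr hqr
end

section
/- Let t ≥ 1 and i ≥ 1 be natural numbers, and let p₀, p₁, …, p_{i+1} be pairwise distinct complex numbers. For each k ∈ {0, …, i+1} define f_k(X) = (X−p_k)^i · ∏_{j=0}^{i+1} (X−p_j)^t. Then the i+2 polynomials f₀, …, f_{i+1} are linearly dependent over ℂ, and they are pairwise non-proportional. -/
open Polynomial

/-!
After cancelling the common factor `∏ j, (X - C (p j)) ^ t`, the `i + 2` polynomials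
`(X - C (p k)) ^ i` lie in the `(i + 1)`-dimensional space of polynomials of degree `≤ i`, so they
are dependent. Two of them are not proportional: `(X - C a) ^ i = e * (X - C b) ^ i` evaluated
at `a` forces `e = 0`.
-/

theorem Polynomial.not_linearIndependent_of_mem_degreeLT {K ι : Type*} [Field K] [Fintype ι]
    {n : ℕ} (f : ι → K[X]) (hf : ∀ k, f k ∈ degreeLT K n) (hcard : n < Fintype.card ι) :
    ¬ LinearIndependent K f := by
  intro h
  have hlin : LinearIndependent K fun k => (⟨f k, hf k⟩ : degreeLT K n) :=
    .of_comp (degreeLT K n).subtype h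
  have := hlin.fintype_card_le_finrank
  rw [Module.finrank_eq_card_basis (degreeLT.basis K n), Fintype.card_fin] at this
  omega

theorem Polynomial.X_sub_C_pow_mem_degreeLT {R : Type*} [CommRing R] [IsDomain R] (a : R)
    (n : ℕ) : (X - C a) ^ n ∈ degreeLT R (n + 1) := by
  rw [mem_degreeLT, degree_pow, degree_X_sub_C, nsmul_one]
  exact_mod_cast n.lt_succ_self

theorem Polynomial.X_sub_C_pow_ne_C_mul_X_sub_C_pow_s7 {R : Type*} [CommRing R] [IsDomain R]
    {a b : R} (hab : a ≠ b) {n : ℕ} (hn : n ≠ 0) (e : R) :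
    (X - C a) ^ n ≠ C e * (X - C b) ^ n := by
  intro h
  have he : e = 0 := by
    have := congrArg (eval a) h
    simp only [eval_pow, eval_sub, eval_X, eval_C, eval_mul, sub_self, zero_pow hn] at this
    exact (mul_eq_zero.mp this.symm).resolve_right (pow_ne_zero n (sub_ne_zero.mpr hab))
  rw [he, C_0, zero_mul] at h
  exact pow_ne_zero n (X_sub_C_ne_zero a) h

theorem NonProp.mul_right {f g : ℂ[X]} (h : NonProp f g) {Q : ℂ[X]} (hQ : Q ≠ 0) :
    NonProp (f * Q) (g * Q) := fun e => by
  simp only [← mul_assoc, ne_eq, mul_left_inj' hQ]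
  exact h e

theorem nonProp_X_sub_C_pow {a b : ℂ} (hab : a ≠ b) {n : ℕ} (hn : n ≠ 0) :
    NonProp ((X - C a) ^ n) ((X - C b) ^ n) := fun e =>
  ⟨X_sub_C_pow_ne_C_mul_X_sub_C_pow_s7 hab hn e, X_sub_C_pow_ne_C_mul_X_sub_C_pow_s7 hab.symm hn e⟩

theorem stmt_7_general (t i : ℕ) (hi : 1 ≤ i) (p : Fin (i + 2) → ℂ)
    (hp : Function.Injective p) :
    ¬ LinearIndependent ℂ
        (fun k : Fin (i + 2) => (X - C (p k)) ^ i * ∏ j, (X - C (p j)) ^ t) ∧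
    Pairwise fun k l : Fin (i + 2) =>
      NonProp ((X - C (p k)) ^ i * ∏ j, (X - C (p j)) ^ t)
        ((X - C (p l)) ^ i * ∏ j, (X - C (p j)) ^ t) := by
  set Q : ℂ[X] := ∏ j, (X - C (p j)) ^ t
  have hQ : Q ≠ 0 := Finset.prod_ne_zero_iff.2 fun j _ => pow_ne_zero t (X_sub_C_ne_zero (p j))
  refine ⟨fun h => ?_, fun k l hkl => ?_⟩
  · refine not_linearIndependent_of_mem_degreeLT (n := i + 1) (fun k => (X - C (p k)) ^ i)
      (fun k => X_sub_C_pow_mem_degreeLT _ _) (by simp) ?_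
    exact h.of_comp (LinearMap.mulRight ℂ Q)
  · exact (nonProp_X_sub_C_pow (hp.ne hkl) (by omega)).mul_right hQ

theorem stmt_7 (t i : ℕ) (ht : 1 ≤ t) (hi : 1 ≤ i) (p : Fin (i + 2) → ℂ)
    (hp : Function.Injective p) :
    ¬ LinearIndependent ℂ
        (fun k : Fin (i + 2) => (X - C (p k)) ^ i * ∏ j, (X - C (p j)) ^ t) ∧
    Pairwise fun k l : Fin (i + 2) =>
      NonProp ((X - C (p k)) ^ i * ∏ j, (X - C (p j)) ^ t)
        ((X - C (p l)) ^ i * ∏ j, (X - C (p j)) ^ t) :=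
  stmt_7_general t i hi p hp
end

section
/- Let f₁, …, fₙ ∈ ℂ[X], let α ∈ ℂ, and let m₁, …, mₙ be natural numbers with mᵢ ≥ n−1 for all i, such that (X−α)^{mᵢ} divides fᵢ for each i. Then (X−α)^{m₁+⋯+mₙ−n(n−1)} divides the Wronskian W(f₁, …, fₙ). -/
open Polynomial

/-- The Wronskian of an `n`-tuple of polynomials: determinant of the matrix whose
`(j,k)` entry is the `j`-th derivative of the `k`-th polynomial. -/
noncomputable def Wronskian {n : ℕ} (f : Fin n → Polynomial ℂ) : Polynomial ℂ :=
  (Matrix.of fun j k : Fin n => Polynomial.derivative^[(j : ℕ)] (f k)).det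

theorem Finset.sum_tsub_card_nsmul_le {ι M : Type*} [AddCommMonoid M] [PartialOrder M]
    [IsOrderedAddMonoid M] [Sub M] [OrderedSub M] (s : Finset ι) (f : ι → M) (c : M) :
    ∑ i ∈ s, f i - s.card • c ≤ ∑ i ∈ s, (f i - c) := by
  refine tsub_le_iff_right.2 ?_
  calc ∑ i ∈ s, f i ≤ ∑ i ∈ s, (f i - c + c) := Finset.sum_le_sum fun _ _ => le_tsub_add
    _ = ∑ i ∈ s, (f i - c) + s.card • c := by rw [Finset.sum_add_distrib, Finset.sum_const]

theorem Matrix.prod_dvd_det_of_forall_dvd_col {ι R : Type*} [Fintype ι] [DecidableEq ι]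
    [CommRing R] (M : Matrix ι ι R) (d : ι → R) (h : ∀ i j, d j ∣ M i j) :
    ∏ j, d j ∣ M.det := by
  rw [Matrix.det_apply]
  refine Finset.dvd_sum fun σ _ => dvd_smul_of_dvd _ ?_
  exact Finset.prod_dvd_prod_of_dvd _ _ fun j _ => h (σ j) j

theorem pow_sum_tsub_dvd_wronskian {n : ℕ} (f : Fin n → ℂ[X]) (q : ℂ[X]) (m : Fin n → ℕ)
    (hdvd : ∀ i, q ^ m i ∣ f i) : q ^ ∑ i, (m i - (n - 1)) ∣ Wronskian f := by
  rw [← Finset.prod_pow_eq_pow_sum]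
  refine Matrix.prod_dvd_det_of_forall_dvd_col _ _ fun j k => ?_
  calc q ^ (m k - (n - 1)) ∣ q ^ (m k - j) := pow_dvd_pow _ (by omega)
    _ ∣ derivative^[j] (f k) := pow_sub_dvd_iterate_derivative_of_pow_dvd _ (hdvd k)

theorem stmt_9_general (n : ℕ) (f : Fin n → Polynomial ℂ) (α : ℂ) (m : Fin n → ℕ)
    (hdvd : ∀ i, (X - C α) ^ (m i) ∣ f i) :
    (X - C α) ^ ((∑ i, m i) - n * (n - 1)) ∣ Wronskian f := by
  have hexp : (∑ i, m i) - n * (n - 1) ≤ ∑ i, (m i - (n - 1)) := by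
    simpa using Finset.sum_tsub_card_nsmul_le Finset.univ m (n - 1)
  exact (pow_dvd_pow _ hexp).trans (pow_sum_tsub_dvd_wronskian f _ m hdvd)

theorem stmt_9 (n : ℕ) (f : Fin n → Polynomial ℂ) (α : ℂ) (m : Fin n → ℕ)
    (hm : ∀ i, n - 1 ≤ m i) (hdvd : ∀ i, (X - C α) ^ (m i) ∣ f i) :
    (X - C α) ^ ((∑ i, m i) - n * (n - 1)) ∣ Wronskian f :=
  stmt_9_general n f α m hdvd
end

section
/- Let p ≥ 4 be a natural number. Then there do not exist three pairwise non-proportional polynomials f₁, f₂, f₃ ∈ ℂ[X], each of the form fᵢ = cᵢ(X−aᵢ)^p(X−bᵢ)² with cᵢ ≠ 0 and aᵢ ≠ bᵢ, such that f₁ + f₂ + f₃ = 0. -/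
/-!
Put `W = f₀ f₁' - f₀' f₁`. From `f₀ + f₁ + f₂ = 0` we get `W = W(f₁, f₂) = W(f₂, f₀)`, and a
common root of multiplicities `μ` in `f` and `ν` in `g` is a root of multiplicity at least
`μ + ν - 1` of `W(f, g)`. Choosing at each point the pair that omits an `fᵢ` vanishing there to
order at most 2, `W` vanishes to order at least `∑ᵢ (μᵢ - 1)`, so, as in the Mason–Stothers
theorem, `3p ≤ deg W < deg f₀ + deg f₁ = 2p + 4`. Here `W ≠ 0` since `f₀` and `f₁` are not
proportional. The order condition fails only when `a₀ = a₁ = a₂`; cancelling `(X - a₀)^p` then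
leaves a linear relation between the squares `(X - bᵢ)²`, impossible for distinct `bᵢ`.
-/

open Polynomial

theorem Multiset.count_sub_dedup {α : Type*} [DecidableEq α] (s : Multiset α) (a : α) :
    (s - s.dedup).count a = s.count a - 1 := by
  rw [Multiset.count_sub, Multiset.count_dedup]
  split_ifs with h
  · rfl
  · rw [Multiset.count_eq_zero.2 h]

theorem Multiset.card_replicate_add_replicate_sub_dedup {α : Type*} [DecidableEq α] {a b : α}
    (hab : a ≠ b) {m n : ℕ} (hm : m ≠ 0) (hn : n ≠ 0) :
    card (replicate m a + replicate n b - (replicate m a + replicate n b).dedup) = m + n - 2 := by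
  have hdedup : (replicate m a + replicate n b).toFinset = {a, b} := by
    ext r
    simp [hm, hn, eq_comm]
  rw [card_sub (dedup_le _), ← toFinset_val, hdedup, Finset.card_val, Finset.card_pair hab,
    card_add, card_replicate, card_replicate]

namespace Polynomial

section CommRing

variable {R : Type*} [CommRing R]

theorem wronskian_mul_mul_left (d f g : R[X]) :
    wronskian (d * f) (d * g) = d ^ 2 * wronskian f g := by
  simp only [wronskian, derivative_mul]
  ring

theorem pow_dvd_wronskian_of_pow_dvd {q f g : R[X]} {m n : ℕ} (hf : q ^ m ∣ f)
    (hg : q ^ n ∣ g) : q ^ (m + n - 1) ∣ wronskian f g := by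
  have hfg' : q ^ (m + n - 1) ∣ f * derivative g := by
    refine (pow_dvd_pow q (by omega : m + n - 1 ≤ m + (n - 1))).trans ?_
    rw [pow_add]
    exact mul_dvd_mul hf (pow_sub_one_dvd_derivative_of_pow_dvd hg)
  have hf'g : q ^ (m + n - 1) ∣ derivative f * g := by
    refine (pow_dvd_pow q (by omega : m + n - 1 ≤ m - 1 + n)).trans ?_
    rw [pow_add]
    exact mul_dvd_mul (pow_sub_one_dvd_derivative_of_pow_dvd hf) hg
  exact dvd_sub hfg' hf'g

theorem rootMultiplicity_add_sub_one_le_rootMultiplicity_wronskian {f g : R[X]}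
    (hw : wronskian f g ≠ 0) (r : R) :
    rootMultiplicity r f + rootMultiplicity r g - 1 ≤ rootMultiplicity r (wronskian f g) :=
  (le_rootMultiplicity_iff hw).2 <|
    pow_dvd_wronskian_of_pow_dvd (pow_rootMultiplicity_dvd f r) (pow_rootMultiplicity_dvd g r)

theorem sum_rootMultiplicity_sub_one_le_rootMultiplicity_wronskian {f g h : R[X]}
    (hsum : f + g + h = 0) (hw : wronskian f g ≠ 0) (r : R)
    (hr : rootMultiplicity r f ≤ 2 ∨ rootMultiplicity r g ≤ 2 ∨ rootMultiplicity r h ≤ 2) :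
    (rootMultiplicity r f - 1) + (rootMultiplicity r g - 1) + (rootMultiplicity r h - 1) ≤
      rootMultiplicity r (wronskian f g) := by
  have hgh : wronskian g h = wronskian f g := (wronskian_eq_of_sum_zero hsum).symm
  have hhf : wronskian h f = wronskian f g :=
    (wronskian_eq_of_sum_zero (by rw [← hsum]; ring : g + h + f = 0)).symm.trans hgh
  have hfg := rootMultiplicity_add_sub_one_le_rootMultiplicity_wronskian hw r
  have hgh' := hgh ▸ rootMultiplicity_add_sub_one_le_rootMultiplicity_wronskian (hgh ▸ hw) r
  have hhf' := hhf ▸ rootMultiplicity_add_sub_one_le_rootMultiplicity_wronskian (hhf ▸ hw) r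
  omega

end CommRing

theorem exists_eq_C_mul_of_wronskian_eq_zero {K : Type*} [Field K] [CharZero K] {f g : K[X]}
    (hf : f ≠ 0) (hw : wronskian f g = 0) : ∃ e, g = C e * f := by
  classical
  have hd : gcd f g ≠ 0 := gcd_ne_zero_of_left hf
  have hcop := isCoprime_div_gcd_div_gcd_of_gcd_ne_zero hd
  have hf' := (EuclideanDomain.mul_div_cancel' hd (gcd_dvd_left f g)).symm
  have hg' := (EuclideanDomain.mul_div_cancel' hd (gcd_dvd_right f g)).symm
  generalize f / gcd f g = f' at hcop hf'
  generalize g / gcd f g = g' at hcop hg'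
  generalize gcd f g = d at hd hf' hg'
  subst hf' hg'
  rw [wronskian_mul_mul_left, mul_eq_zero, hcop.wronskian_eq_zero_iff] at hw
  obtain ⟨hf'0, hg'0⟩ := hw.resolve_left (pow_ne_zero 2 hd)
  rw [eq_C_of_derivative_eq_zero hf'0] at hf ⊢
  rw [eq_C_of_derivative_eq_zero hg'0]
  have hα : f'.coeff 0 ≠ 0 := by rintro h; simp [h] at hf
  refine ⟨g'.coeff 0 / f'.coeff 0, ?_⟩
  rw [mul_left_comm, ← C_mul, div_mul_cancel₀ _ hα]

section Domain

variable {R : Type*} [CommRing R] [IsDomain R]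

/- `f.roots - f.roots.dedup` holds each root of `f` with its multiplicity lowered by one. -/
theorem roots_sub_dedup_add_le_roots_wronskian [DecidableEq R] {f g h : R[X]}
    (hsum : f + g + h = 0) (hw : wronskian f g ≠ 0)
    (hr : ∀ r, rootMultiplicity r f ≤ 2 ∨ rootMultiplicity r g ≤ 2 ∨ rootMultiplicity r h ≤ 2) :
    f.roots - f.roots.dedup + (g.roots - g.roots.dedup) + (h.roots - h.roots.dedup) ≤
      (wronskian f g).roots := by
  refine Multiset.le_iff_count.2 fun r => ?_
  simp only [Multiset.count_add, Multiset.count_sub_dedup, count_roots]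
  exact sum_rootMultiplicity_sub_one_le_rootMultiplicity_wronskian hsum hw r (hr r)

theorem card_roots_sub_dedup_add_lt_natDegree [DecidableEq R] {f g h : R[X]}
    (hsum : f + g + h = 0) (hw : wronskian f g ≠ 0)
    (hr : ∀ r, rootMultiplicity r f ≤ 2 ∨ rootMultiplicity r g ≤ 2 ∨ rootMultiplicity r h ≤ 2) :
    Multiset.card (f.roots - f.roots.dedup) + Multiset.card (g.roots - g.roots.dedup) +
      Multiset.card (h.roots - h.roots.dedup) < f.natDegree + g.natDegree :=
  calc _ = Multiset.card (f.roots - f.roots.dedup + (g.roots - g.roots.dedup) +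
          (h.roots - h.roots.dedup)) := by simp only [Multiset.card_add]
    _ ≤ Multiset.card (wronskian f g).roots :=
      Multiset.card_le_card (roots_sub_dedup_add_le_roots_wronskian hsum hw hr)
    _ ≤ (wronskian f g).natDegree := card_roots' _
    _ < f.natDegree + g.natDegree := natDegree_wronskian_lt_add hw

variable {c a b : R} {m n : ℕ}

theorem C_mul_X_sub_C_pow_mul_X_sub_C_pow_ne_zero (hc : c ≠ 0) :
    C c * (X - C a) ^ m * (X - C b) ^ n ≠ 0 := by
  simp [hc, X_sub_C_ne_zero]

theorem roots_C_mul_X_sub_C_pow_mul_X_sub_C_pow (hc : c ≠ 0) :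
    (C c * (X - C a) ^ m * (X - C b) ^ n).roots = .replicate m a + .replicate n b := by
  rw [mul_assoc, roots_C_mul _ hc, roots_mul (by simp [X_sub_C_ne_zero]), roots_pow, roots_pow,
    roots_X_sub_C, roots_X_sub_C, Multiset.nsmul_singleton, Multiset.nsmul_singleton]

theorem natDegree_C_mul_X_sub_C_pow_mul_X_sub_C_pow (hc : c ≠ 0) :
    (C c * (X - C a) ^ m * (X - C b) ^ n).natDegree = m + n := by
  rw [mul_assoc, natDegree_C_mul hc, natDegree_mul (by simp [X_sub_C_ne_zero])
    (by simp [X_sub_C_ne_zero]), natDegree_pow, natDegree_pow, natDegree_X_sub_C,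
    natDegree_X_sub_C, mul_one, mul_one]

theorem rootMultiplicity_C_mul_X_sub_C_pow_mul_X_sub_C_pow_le (hc : c ≠ 0) {r : R}
    (hr : a ≠ r) : rootMultiplicity r (C c * (X - C a) ^ m * (X - C b) ^ n) ≤ n := by
  classical
  rw [← count_roots, roots_C_mul_X_sub_C_pow_mul_X_sub_C_pow hc, Multiset.count_add,
    Multiset.count_replicate, Multiset.count_replicate, if_neg hr]
  split_ifs <;> omega

theorem C_mul_X_sub_C_sq_add_add_ne_zero [NeZero (2 : R)] {c₀ c₁ c₂ b₀ b₁ b₂ : R}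
    (hc : c₀ ≠ 0) (h₀₁ : b₀ ≠ b₁) (h₀₂ : b₀ ≠ b₂) :
    C c₀ * (X - C b₀) ^ 2 + C c₁ * (X - C b₁) ^ 2 + C c₂ * (X - C b₂) ^ 2 ≠ 0 := by
  intro h
  have e : ∀ x, c₀ * (x - b₀) ^ 2 + c₁ * (x - b₁) ^ 2 + c₂ * (x - b₂) ^ 2 = 0 := fun x => by
    simpa using congrArg (eval x) h
  have key : c₀ * (2 * ((b₀ - b₁) * (b₀ - b₂)) ^ 2) = 0 := by
    linear_combination (b₀ - b₁) ^ 2 * e b₂ + (b₀ - b₂) ^ 2 * e b₁ - (b₁ - b₂) ^ 2 * e b₀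
  simp [hc, sub_eq_zero, h₀₁, h₀₂, two_ne_zero] at key

theorem C_mul_X_sub_C_pow_mul_X_sub_C_sq_add_add_ne_zero [NeZero (2 : R)]
    {c₀ c₁ c₂ b₀ b₁ b₂ : R} (hc : c₀ ≠ 0) (h₀₁ : b₀ ≠ b₁) (h₀₂ : b₀ ≠ b₂) :
    C c₀ * (X - C a) ^ m * (X - C b₀) ^ 2 + C c₁ * (X - C a) ^ m * (X - C b₁) ^ 2 +
      C c₂ * (X - C a) ^ m * (X - C b₂) ^ 2 ≠ 0 := by
  intro h
  refine mul_ne_zero (pow_ne_zero m (X_sub_C_ne_zero a))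
    (C_mul_X_sub_C_sq_add_add_ne_zero (c₁ := c₁) (c₂ := c₂) hc h₀₁ h₀₂) ?_
  linear_combination h

end Domain

end Polynomial

theorem stmt_12 (p : ℕ) (hp : 4 ≤ p) :
    ¬ ∃ (f : Fin 3 → Polynomial ℂ) (c a b : Fin 3 → ℂ),
        (∀ i, c i ≠ 0) ∧ (∀ i, a i ≠ b i) ∧
        (∀ i, f i = C (c i) * (X - C (a i)) ^ p * (X - C (b i)) ^ 2) ∧
        (Pairwise fun i j => NonProp (f i) (f j)) ∧
        f 0 + f 1 + f 2 = 0 := by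
  classical
  rintro ⟨f, c, a, b, hc, hab, hf, hNP, hsum⟩
  by_cases hA : a 0 = a 1 ∧ a 0 = a 2
  · have hb : ∀ i j, i ≠ j → a i = a j → b i ≠ b j := fun i j hij hai hbi =>
      (hNP hij (c i / c j)).1 (by rw [hf i, hf j, hai, hbi, ← mul_assoc, ← mul_assoc, ← C_mul,
        div_mul_cancel₀ _ (hc j)])
    refine C_mul_X_sub_C_pow_mul_X_sub_C_sq_add_add_ne_zero (a := a 0) (m := p) (c₁ := c 1)
      (c₂ := c 2) (hc 0) (hb 0 1 (by decide) hA.1) (hb 0 2 (by decide) hA.2) ?_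
    rw [← hsum, hf 0, hf 1, hf 2, ← hA.1, ← hA.2]
  have hw : wronskian (f 0) (f 1) ≠ 0 := fun hw =>
    let ⟨e, he⟩ := exists_eq_C_mul_of_wronskian_eq_zero
      (hf 0 ▸ C_mul_X_sub_C_pow_mul_X_sub_C_pow_ne_zero (hc 0)) hw
    (hNP (by decide : (0 : Fin 3) ≠ 1) e).2 he
  have hr : ∀ r, rootMultiplicity r (f 0) ≤ 2 ∨ rootMultiplicity r (f 1) ≤ 2 ∨
      rootMultiplicity r (f 2) ≤ 2 := by
    intro r
    by_contra! h
    have ha (i) (hi : 2 < rootMultiplicity r (f i)) : a i = r := by_contra fun hne =>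
      (hf i ▸ rootMultiplicity_C_mul_X_sub_C_pow_mul_X_sub_C_pow_le (hc i) hne).not_gt hi
    exact hA ⟨(ha 0 h.1).trans (ha 1 h.2.1).symm, (ha 0 h.1).trans (ha 2 h.2.2).symm⟩
  have hcount := card_roots_sub_dedup_add_lt_natDegree hsum hw hr
  simp only [hf, roots_C_mul_X_sub_C_pow_mul_X_sub_C_pow (hc _),
    natDegree_C_mul_X_sub_C_pow_mul_X_sub_C_pow (hc _),
    Multiset.card_replicate_add_replicate_sub_dedup (hab _) (by omega : p ≠ 0) two_ne_zero]
    at hcount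
  omega
end

section
/- There exist distinct complex numbers a, b ∈ ℂ \ {0, −1} and nonzero complex numbers λ, ν such that (X+1)⁴ − X⁴ = λ(X+a)³ + ν(X+b)³ in ℂ[X]. Consequently, there are four pairwise non-proportional binary forms of degree 7, each with root multiplicity type (4,3), whose sum is zero. -/
open Polynomial

/-- two binary forms are non-proportional -/
def MvNonProp (f g : MvPolynomial (Fin 2) ℂ) : Prop :=
  ∀ e : ℂ, f ≠ MvPolynomial.C e * g ∧ g ≠ MvPolynomial.C e * f

/-- a binary form of root multiplicity type `(4,3)`: a nonzero constant times
`L₁⁴ L₂³` with `L₁, L₂` non-proportional linear forms. -/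
def IsType43 (f : MvPolynomial (Fin 2) ℂ) : Prop :=
  ∃ c a₁ b₁ a₂ b₂ : ℂ, c ≠ 0 ∧ a₁ * b₂ - a₂ * b₁ ≠ 0 ∧
    f = MvPolynomial.C c * (MvPolynomial.C a₁ * MvPolynomial.X 0 + MvPolynomial.C b₁ * MvPolynomial.X 1) ^ 4
      * (MvPolynomial.C a₂ * MvPolynomial.X 0 + MvPolynomial.C b₂ * MvPolynomial.X 1) ^ 3

/-!
If `6 t (1 - t) = 1`, i.e. `t = (3 ± √3) / 6`, then in every commutative ring
`(x + y)⁴ - x⁴ = 2 y (x + t y)³ + 2 y (x + (1 - t) y)³`.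
At `y = 1` this is the polynomial identity; multiplied by `y³` it writes `0` as a sum of the four
forms `(x + y)⁴ y³`, `-x⁴ y³`, `-2 (x + t y)³ y⁴`, `-2 (x + (1 - t) y)³ y⁴`, all of type `(4,3)`.
A form `c (x + s y)ᵐ yⁿ` with `c ≠ 0`, `m > 0` vanishes at `(-s, 1)` and at no `(-s', 1)` with
`s' ≠ s`, so evaluating at these points shows that such forms with distinct `s` are
non-proportional; here `s` runs over the distinct values `1, 0, t, 1 - t`.
-/

theorem add_pow_four_sub_pow_four {R : Type*} [CommRing R] {t : R} (ht : 6 * (t * (1 - t)) = 1)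
    (x y : R) :
    (x + y) ^ 4 - x ^ 4 = 2 * y * (x + t * y) ^ 3 + 2 * y * (x + (1 - t) * y) ^ 3 := by
  linear_combination (2 * x * y ^ 3 + y ^ 4) * ht

theorem exists_six_mul_mul_one_sub_eq_one : ∃ t : ℂ, 6 * (t * (1 - t)) = 1 := by
  obtain ⟨s, hs⟩ := IsAlgClosed.exists_pow_nat_eq (3 : ℂ) two_pos
  exact ⟨(3 - s) / 6, by linear_combination (-1 / 6 : ℂ) * hs⟩

noncomputable def binaryForm (c t : ℂ) (m n : ℕ) : MvPolynomial (Fin 2) ℂ :=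
  MvPolynomial.C c * (MvPolynomial.X 0 + MvPolynomial.C t * MvPolynomial.X 1) ^ m *
    MvPolynomial.X 1 ^ n

theorem eval_binaryForm (c t s : ℂ) (m n : ℕ) :
    MvPolynomial.eval ![-s, 1] (binaryForm c t m n) = c * (t - s) ^ m := by
  simp [binaryForm, neg_add_eq_sub]

theorem isType43_binaryForm_four_three {c : ℂ} (hc : c ≠ 0) (t : ℂ) :
    IsType43 (binaryForm c t 4 3) :=
  ⟨c, 1, t, 0, 1, hc, by simp, by simp [binaryForm]⟩

theorem isType43_binaryForm_three_four {c : ℂ} (hc : c ≠ 0) (t : ℂ) :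
    IsType43 (binaryForm c t 3 4) :=
  ⟨c, 0, 1, 1, t, hc, by simp, by simp [binaryForm]; ring⟩

theorem mvNonProp_of_eval {f g : MvPolynomial (Fin 2) ℂ} (p q : Fin 2 → ℂ)
    (hfp : MvPolynomial.eval p f = 0) (hgq : MvPolynomial.eval q g = 0)
    (hfq : MvPolynomial.eval q f ≠ 0) (hgp : MvPolynomial.eval p g ≠ 0) : MvNonProp f g := by
  refine fun e => ⟨?_, ?_⟩
  · rintro rfl
    exact hfq (by simp [hgq])
  · rintro rfl
    exact hgp (by simp [hfp])

theorem mvNonProp_binaryForm {c c' t t' : ℂ} {m m' : ℕ} (hc : c ≠ 0) (hc' : c' ≠ 0)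
    (hm : m ≠ 0) (hm' : m' ≠ 0) (ht : t ≠ t') (n n' : ℕ) :
    MvNonProp (binaryForm c t m n) (binaryForm c' t' m' n') := by
  apply mvNonProp_of_eval ![-t, 1] ![-t', 1] <;>
    simp [eval_binaryForm, hc, hc', hm, hm', sub_eq_zero, ht, ht.symm]

theorem pairwise_mvNonProp_binaryForm {ι : Type*} {c t : ι → ℂ} {m : ι → ℕ}
    (hc : ∀ i, c i ≠ 0) (hm : ∀ i, m i ≠ 0) (ht : Function.Injective t) (n : ι → ℕ) :
    Pairwise fun i j => MvNonProp (binaryForm (c i) (t i) (m i) (n i))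
      (binaryForm (c j) (t j) (m j) (n j)) :=
  fun _ _ hij => mvNonProp_binaryForm (hc _) (hc _) (hm _) (hm _) (ht.ne hij) _ _

theorem stmt_13 :
    (∃ a b lam nu : ℂ, a ≠ b ∧ a ≠ 0 ∧ a ≠ -1 ∧ b ≠ 0 ∧ b ≠ -1 ∧ lam ≠ 0 ∧ nu ≠ 0 ∧
      (X + 1 : Polynomial ℂ) ^ 4 - X ^ 4 = C lam * (X + C a) ^ 3 + C nu * (X + C b) ^ 3) ∧
    ∃ F : Fin 4 → MvPolynomial (Fin 2) ℂ,
      (∀ i, IsType43 (F i)) ∧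
      (Pairwise fun i j => MvNonProp (F i) (F j)) ∧
      ∑ i, F i = 0 := by
  obtain ⟨t, ht⟩ := exists_six_mul_mul_one_sub_eq_one
  have key {S : Type} [CommRing S] (f : ℂ →+* S) (x y : S) :
      (x + y) ^ 4 - x ^ 4 = 2 * y * (x + f t * y) ^ 3 + 2 * y * (x + (1 - f t) * y) ^ 3 :=
    add_pow_four_sub_pow_four (by simpa [map_ofNat] using congrArg f ht) x y
  have ht' : 6 * ((1 - t) * (1 - (1 - t))) = 1 := by linear_combination ht
  have hne (s : ℂ) (hs : 6 * (s * (1 - s)) ≠ 1) : t ≠ s ∧ 1 - t ≠ s :=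
    ⟨fun h => hs (h ▸ ht), fun h => hs (h ▸ ht')⟩
  obtain ⟨ht0, ht0'⟩ := hne 0 (by norm_num)
  obtain ⟨ht1, ht1'⟩ := hne 1 (by norm_num)
  obtain ⟨htm1, htm1'⟩ := hne (-1) (by norm_num)
  have htt : t ≠ 1 - t := fun h => (hne (1 / 2) (by norm_num)).1 (by linear_combination h / 2)
  refine ⟨⟨t, 1 - t, 2, 2, htt, ht0, htm1, ht0', htm1', two_ne_zero, two_ne_zero, ?_⟩,
    fun i => binaryForm (![1, -1, -2, -2] i) (![1, 0, t, 1 - t] i) (![4, 4, 3, 3] i)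
      (![3, 3, 4, 4] i), ?_, ?_, ?_⟩
  · simpa only [map_ofNat, map_sub, map_one, mul_one] using key C X 1
  · intro i
    fin_cases i
    exacts [isType43_binaryForm_four_three one_ne_zero _,
      isType43_binaryForm_four_three (by norm_num) _,
      isType43_binaryForm_three_four (by norm_num) _,
      isType43_binaryForm_three_four (by norm_num) _]
  · refine pairwise_mvNonProp_binaryForm ?_ ?_ ?_ _
    · intro i; fin_cases i <;> norm_num
    · intro i; fin_cases i <;> norm_num
    · simp [Function.Injective, Fin.forall_fin_succ, ht0, ht1, ht0', ht1', htt, ht0.symm,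
        ht1.symm, ht0'.symm, ht1'.symm, htt.symm]
  · simp only [binaryForm, Fin.sum_univ_four, Matrix.cons_val_zero, Matrix.cons_val_one,
      Matrix.cons_val, MvPolynomial.C_1, MvPolynomial.C_0, MvPolynomial.C_neg, MvPolynomial.C_sub,
      map_ofNat]
    linear_combination MvPolynomial.X 1 ^ 3 *
      key (MvPolynomial.C (σ := Fin 2)) (MvPolynomial.X 0) (MvPolynomial.X 1)
end
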